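/- For every x ∈ [0, 1/2], the series ∑_{k≥1} C(2k,k) x^{2k}/(2k−1)³ converges to 1 − √(1−4x²) − 2x·arcsin(2x) + 2x∫_0^x (arcsin(2y)/y) dy. -/

import Mathlib

open Real
set_option maxHeartbeats 1000000

noncomputable section CBAux

private def cb (k : ℕ) : ℝ := (Nat.centralBinom k : ℝ)

private lemma cb_nonneg (k : ℕ) : 0 ≤ cb k := Nat.cast_nonneg _

private lemma cb_zero : cb 0 = 1 := by simp [cb, Nat.centralBinom]

private lemma cb_rec (k : ℕ) : ((k : ℝ) + 1) * cb (k + 1) = 2 * (2 * k + 1) * cb k := by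
  have := Nat.succ_mul_centralBinom_succ k
  have h2 : (((k + 1) * (k + 1).centralBinom : ℕ) : ℝ)
      = ((2 * (2 * k + 1) * k.centralBinom : ℕ) : ℝ) := by rw [this]
  push_cast at h2
  simpa [cb, mul_comm, mul_assoc, mul_left_comm] using h2

private lemma cb_le_pow (k : ℕ) : cb k ≤ 4 ^ k := by
  induction k with
  | zero => simp [cb_zero]
  | succ n ih =>
    have hrec := cb_rec n
    have hn : (0:ℝ) < (n:ℝ) + 1 := by positivity
    have hp : (0:ℝ) ≤ 4 ^ n := by positivity
    have hcb := cb_nonneg n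
    have key : ((n:ℝ) + 1) * cb (n + 1) ≤ ((n:ℝ) + 1) * 4 ^ (n + 1) := by
      rw [hrec, pow_succ]
      nlinarith
    exact le_of_mul_le_mul_left key hn

end CBAux

noncomputable section GSec

private def gFun (y : ℝ) : ℝ := ∑' k : ℕ, cb k * y ^ (2 * k)

private lemma ratio_lt_one {b : ℝ} (hb : b < 1/2) (hb0 : 0 ≤ b) : 4 * b ^ 2 < 1 := by nlinarith

private lemma summable_g {y : ℝ} (hy : |y| < 1/2) :
    Summable (fun k : ℕ => cb k * y ^ (2 * k)) := by
  have h4y : 4 * y ^ 2 < 1 := by nlinarith [sq_abs y, abs_nonneg y]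
  apply Summable.of_norm_bounded (g := fun k => (4 * y ^ 2) ^ k)
  · exact summable_geometric_of_lt_one (by positivity) h4y
  · intro k
    rw [Real.norm_eq_abs, abs_mul, abs_of_nonneg (cb_nonneg k), abs_pow]
    calc cb k * |y| ^ (2 * k) ≤ 4 ^ k * |y| ^ (2 * k) := by
          have h1 := cb_le_pow k
          have h2 : (0:ℝ) ≤ |y| ^ (2 * k) := by positivity
          nlinarith
    _ = (4 * y ^ 2) ^ k := by
          rw [mul_pow, pow_mul, sq_abs]

private lemma hasSum_g {y : ℝ} (hy : |y| < 1/2) :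
    HasSum (fun k : ℕ => cb k * y ^ (2 * k)) (gFun y) := (summable_g hy).hasSum

private lemma summable_dg {b : ℝ} (hb0 : 0 < b) (hb : b < 1/2) :
    Summable (fun k : ℕ => 2 * k * 4 ^ k * b ^ (2 * k - 1)) := by
  have h4b : ‖4 * b ^ 2‖ < 1 := by
    rw [Real.norm_eq_abs, abs_of_nonneg (by positivity)]
    exact ratio_lt_one hb hb0.le
  have h := (summable_pow_mul_geometric_of_norm_lt_one 1 h4b).mul_left (2 / b)
  apply h.congr
  intro k
  cases k with
  | zero => simp
  | succ n =>
    have h1 : 2 * (n + 1) - 1 = 2 * n + 1 := by omega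
    have h2 : (b ^ 2) ^ (n + 1) = b ^ (2 * n + 1) * b := by
      have h3 : 2 * (n + 1) = 2 * n + 1 + 1 := by omega
      rw [← pow_mul, h3, pow_succ]
    rw [h1, mul_pow, h2]
    have hbne : b ≠ 0 := ne_of_gt hb0
    field_simp

private lemma gp_bound {b z : ℝ} (hz : |z| ≤ b) (n : ℕ) :
    |z ^ n| ≤ b ^ n := by
  rw [abs_pow]; exact pow_le_pow_left₀ (abs_nonneg z) hz n

private lemma hasDerivAt_g {y : ℝ} (hy : |y| < 1/2) :
    HasDerivAt gFun (∑' k : ℕ, cb k * (2 * k * y ^ (2 * k - 1))) y := by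
  show HasDerivAt (fun z : ℝ => ∑' k : ℕ, cb k * z ^ (2 * k)) _ y
  obtain ⟨b, hb0, hyb, hb⟩ : ∃ b : ℝ, 0 < b ∧ |y| < b ∧ b < 1/2 :=
    ⟨(|y| + 1/2)/2, by linarith [abs_nonneg y], by linarith, by linarith⟩
  refine hasDerivAt_tsum_of_isPreconnected (F := ℝ) (𝕜 := ℝ) (y₀ := 0)
    (g := fun (k : ℕ) (z : ℝ) => cb k * z ^ (2 * k))
    (g' := fun (k : ℕ) (z : ℝ) => cb k * (2 * k * z ^ (2 * k - 1)))
    (u := fun k : ℕ => 2 * k * 4 ^ k * b ^ (2 * k - 1))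
    (summable_dg hb0 hb) isOpen_Ioo (convex_Ioo (-b) b).isPreconnected
    (fun k z _ => ?_) (fun k z hz => ?_)
    (Set.mem_Ioo.mpr ⟨by linarith, hb0⟩) (summable_g (y := 0) (by norm_num))
    (Set.mem_Ioo.mpr (abs_lt.mp hyb))
  · have h := (hasDerivAt_pow (2 * k) z).const_mul (cb k)
    refine h.congr_deriv (Eq.symm ?_)
    push_cast
    ring
  · have hzb : |z| ≤ b := by
      rcases Set.mem_Ioo.mp hz with ⟨h1, h2⟩
      rw [abs_le]; exact ⟨by linarith, by linarith⟩
    rw [Real.norm_eq_abs, abs_mul, abs_mul, abs_of_nonneg (cb_nonneg k),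
      abs_of_nonneg (by positivity : (0:ℝ) ≤ 2 * (k:ℝ))]
    calc cb k * (2 * (k:ℝ) * |z ^ (2 * k - 1)|)
        ≤ 4 ^ k * (2 * (k:ℝ) * b ^ (2 * k - 1)) := by
          apply mul_le_mul (cb_le_pow k)
            (mul_le_mul_of_nonneg_left (gp_bound hzb _) (by positivity))
            (by positivity) (by positivity)
    _ = 2 * (k:ℝ) * 4 ^ k * b ^ (2 * k - 1) := by ring

private lemma cb_one : cb 1 = 2 := by
  have h := cb_rec 0
  rw [cb_zero] at h
  push_cast at h
  linarith

private lemma summable_dgt {y : ℝ} (hy : |y| < 1/2) :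
    Summable (fun k : ℕ => cb k * (2 * k * y ^ (2 * k - 1))) := by
  obtain ⟨b, hb0, hyb, hb⟩ : ∃ b : ℝ, 0 < b ∧ |y| ≤ b ∧ b < 1/2 :=
    ⟨(|y| + 1/2)/2, by linarith [abs_nonneg y], by linarith, by linarith⟩
  apply Summable.of_norm_bounded (summable_dg hb0 hb)
  intro k
  rw [Real.norm_eq_abs, abs_mul, abs_mul, abs_of_nonneg (cb_nonneg k),
    abs_of_nonneg (by positivity : (0:ℝ) ≤ 2 * (k:ℝ))]
  calc cb k * (2 * (k:ℝ) * |y ^ (2 * k - 1)|)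
      ≤ 4 ^ k * (2 * (k:ℝ) * b ^ (2 * k - 1)) := by
        apply mul_le_mul (cb_le_pow k)
          (mul_le_mul_of_nonneg_left (gp_bound hyb _) (by positivity))
          (by positivity) (by positivity)
  _ = 2 * (k:ℝ) * 4 ^ k * b ^ (2 * k - 1) := by ring

private lemma dg_eq {y : ℝ} (hy : |y| < 1/2) :
    (1 - 4 * y ^ 2) * (∑' k : ℕ, cb k * (2 * k * y ^ (2 * k - 1))) = 4 * y * gFun y := by
  have Sg := hasSum_g hy
  have SD := (summable_dgt hy).hasSum
  set D := ∑' k : ℕ, cb k * (2 * k * y ^ (2 * k - 1)) with hDdef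
  have S1 : HasSum (fun k : ℕ => cb (k + 1) * (2 * ((k:ℝ) + 1) * y ^ (2 * (k + 1) - 1))) D := by
    have heq : (fun k : ℕ => cb (k + 1) * (2 * ((k:ℝ) + 1) * y ^ (2 * (k + 1) - 1)))
        = (fun n : ℕ => cb (n + 1) * (2 * ((n + 1 : ℕ) : ℝ) * y ^ (2 * (n + 1) - 1))) := by
      funext k
      push_cast
      ring
    rw [heq]
    refine (hasSum_nat_add_iff (f := fun k : ℕ => cb k * (2 * (k:ℝ) * y ^ (2 * k - 1))) 1).mpr ?_
    convert SD using 1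
    · rfl
    simp [Finset.sum_range_one]
  have S2 : HasSum (fun k : ℕ =>
      4 * y * (cb k * y ^ (2 * k)) + 4 * y ^ 2 * (cb k * (2 * (k:ℝ) * y ^ (2 * k - 1))))
      (4 * y * gFun y + 4 * y ^ 2 * D) := (Sg.mul_left _).add (SD.mul_left _)
  have key : ∀ k : ℕ,
      4 * y * (cb k * y ^ (2 * k)) + 4 * y ^ 2 * (cb k * (2 * (k:ℝ) * y ^ (2 * k - 1)))
        = cb (k + 1) * (2 * ((k:ℝ) + 1) * y ^ (2 * (k + 1) - 1)) := by
    intro k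
    cases k with
    | zero => simp [cb_zero, cb_one]; ring
    | succ n =>
      have e1 : 2 * (n + 1) - 1 = 2 * n + 1 := by omega
      have e2 : 2 * (n + 1 + 1) - 1 = 2 * n + 3 := by omega
      rw [e1, e2]
      push_cast
      have hrec := cb_rec (n + 1)
      push_cast at hrec
      linear_combination (-2 * y ^ (2 * n + 3)) * hrec
  have S2' : HasSum (fun k : ℕ => cb (k + 1) * (2 * ((k:ℝ) + 1) * y ^ (2 * (k + 1) - 1)))
      (4 * y * gFun y + 4 * y ^ 2 * D) := by
    rw [← funext key]
    exact S2
  have hD : D = 4 * y * gFun y + 4 * y ^ 2 * D := S1.unique S2'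
  linear_combination hD

private lemma g_zero : gFun 0 = 1 := by
  unfold gFun
  rw [tsum_eq_single 0 (fun k hk => by
    rw [zero_pow (by omega : 2 * k ≠ 0), mul_zero])]
  simp [cb_zero]

private lemma hasDerivAt_phi {z : ℝ} (hz : |z| < 1/2) :
    HasDerivAt (fun z : ℝ => (1 - 4 * z ^ 2) * gFun z ^ 2) 0 z := by
  have hg := hasDerivAt_g hz
  have hid := dg_eq hz
  have h1 : HasDerivAt (fun z : ℝ => 1 - 4 * z ^ 2) (-(8 * z)) z := by
    have := ((hasDerivAt_pow 2 z).const_mul 4).const_sub 1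
    refine this.congr_deriv (Eq.symm ?_)
    push_cast
    ring
  have h2 : HasDerivAt (fun y : ℝ => gFun y ^ 2)
      (2 * gFun z * ∑' k : ℕ, cb k * (2 * k * z ^ (2 * k - 1))) z := by
    have h := hg.pow 2
    norm_num at h
    exact h
  have h3 := h1.mul h2
  refine h3.congr_deriv (Eq.symm ?_)
  linear_combination (-2 * gFun z) * hid

private lemma g_sq {y : ℝ} (hy0 : 0 ≤ y) (hy : y < 1/2) :
    (1 - 4 * y ^ 2) * gFun y ^ 2 = 1 := by
  have habs : ∀ x : ℝ, x ∈ Set.Icc 0 y → |x| < 1/2 := fun x hx => by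
    rw [abs_of_nonneg hx.1]; linarith [hx.2]
  have h := constant_of_has_deriv_right_zero (f := fun z : ℝ => (1 - 4 * z ^ 2) * gFun z ^ 2)
    (a := 0) (b := y)
    (fun x hx => ((hasDerivAt_phi (habs x hx)).continuousAt).continuousWithinAt)
    (fun x hx => (hasDerivAt_phi (habs x (Set.mem_Icc.mpr ⟨hx.1, hx.2.le⟩))).hasDerivWithinAt)
    y (Set.mem_Icc.mpr ⟨hy0, le_refl y⟩)
  simpa [g_zero] using h

private lemma g_pos {y : ℝ} (hy0 : 0 ≤ y) (hy : y < 1/2) : 0 < gFun y := by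
  have h1 : (1:ℝ) ≤ gFun y := by
    have hs := summable_g (y := y) (by rw [abs_of_nonneg hy0]; exact hy)
    have := Summable.le_tsum hs 0 (fun i _ => mul_nonneg (cb_nonneg i) (pow_nonneg hy0 _))
    exact le_trans (le_of_eq (by simp [cb_zero])) this
  linarith

private lemma sqrt_eq {y : ℝ} (hy0 : 0 ≤ y) (hy : y < 1/2) :
    Real.sqrt (1 - 4 * y ^ 2) = 1 / gFun y := by
  have hgpos := g_pos hy0 hy
  have hsq := g_sq hy0 hy
  have h5 : 1 - 4 * y ^ 2 = (1 / gFun y) ^ 2 := by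
    rw [div_pow, one_pow, eq_div_iff (pow_ne_zero 2 hgpos.ne')]
    exact hsq
  rw [h5, Real.sqrt_sq (by positivity)]

end GSec

noncomputable section ASec

private lemma cb_pow_le {z b : ℝ} (hz : |z| ≤ b) (k : ℕ) :
    cb k * |z| ^ (2 * k) ≤ (4 * b ^ 2) ^ k := by
  calc cb k * |z| ^ (2 * k)
      ≤ 4 ^ k * b ^ (2 * k) := by
        apply mul_le_mul (cb_le_pow k) (pow_le_pow_left₀ (abs_nonneg z) hz _)
          (by positivity) (by positivity)
  _ = (4 * b ^ 2) ^ k := by rw [mul_pow, pow_mul]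

private lemma ratio_lt {y : ℝ} (hy : |y| < 1/2) : 4 * y ^ 2 < 1 := by
  nlinarith [sq_abs y, abs_nonneg y]

private lemma summable_ratio {y : ℝ} (hy : |y| < 1/2) (C : ℝ) :
    Summable (fun k : ℕ => C * (4 * y ^ 2) ^ k) :=
  (summable_geometric_of_lt_one (by positivity) (ratio_lt hy)).mul_left C

private lemma summable_A {y : ℝ} (hy : |y| < 1/2) :
    Summable (fun k : ℕ => 2 * cb k * y ^ (2 * k + 1) / (2 * (k:ℝ) + 1)) := by
  apply Summable.of_norm_bounded (summable_ratio hy 2)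
  intro k
  have hd1 : (1:ℝ) ≤ 2 * (k:ℝ) + 1 := by
    have : (0:ℝ) ≤ (k:ℝ) := Nat.cast_nonneg k
    linarith
  rw [Real.norm_eq_abs, abs_div, abs_of_nonneg (by linarith : (0:ℝ) ≤ 2 * (k:ℝ) + 1)]
  have h1 : |2 * cb k * y ^ (2 * k + 1)| ≤ 2 * (4 * y ^ 2) ^ k := by
    rw [abs_mul, abs_mul, abs_pow, abs_two, abs_of_nonneg (cb_nonneg k), pow_succ, ← mul_assoc]
    have hy1 : |y| ≤ 1 := by linarith [abs_nonneg y]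
    calc 2 * cb k * |y| ^ (2 * k) * |y|
        ≤ 2 * ((4 * y ^ 2) ^ k) * 1 := by
          apply mul_le_mul _ hy1 (abs_nonneg y) (by positivity)
          rw [mul_assoc]
          exact mul_le_mul_of_nonneg_left (cb_pow_le (le_refl _) k |>.trans_eq (by rw [sq_abs]))
            (by norm_num)
    _ = 2 * (4 * y ^ 2) ^ k := by ring
  calc |2 * cb k * y ^ (2 * k + 1)| / (2 * (k:ℝ) + 1)
      ≤ |2 * cb k * y ^ (2 * k + 1)| := div_le_self (abs_nonneg _) hd1
  _ ≤ 2 * (4 * y ^ 2) ^ k := h1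

private lemma hasDerivAt_A {y : ℝ} (hy : |y| < 1/2) :
    HasDerivAt (fun z : ℝ => ∑' k : ℕ, 2 * cb k * z ^ (2 * k + 1) / (2 * (k:ℝ) + 1))
      (∑' k : ℕ, 2 * (cb k * y ^ (2 * k))) y := by
  obtain ⟨b, hb0, hyb, hb⟩ : ∃ b : ℝ, 0 < b ∧ |y| < b ∧ b < 1/2 :=
    ⟨(|y| + 1/2)/2, by linarith [abs_nonneg y], by linarith, by linarith⟩
  have hbb : |b| < 1/2 := by rw [abs_of_pos hb0]; exact hb
  refine hasDerivAt_tsum_of_isPreconnected (F := ℝ) (𝕜 := ℝ) (y₀ := 0)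
    (g := fun (k : ℕ) (z : ℝ) => 2 * cb k * z ^ (2 * k + 1) / (2 * (k:ℝ) + 1))
    (g' := fun (k : ℕ) (z : ℝ) => 2 * (cb k * z ^ (2 * k)))
    (u := fun k : ℕ => 2 * (4 * b ^ 2) ^ k)
    (summable_ratio hbb 2) isOpen_Ioo (convex_Ioo (-b) b).isPreconnected
    (fun k z _ => ?_) (fun k z hz => ?_)
    (Set.mem_Ioo.mpr ⟨by linarith, hb0⟩) (summable_A (y := 0) (by norm_num))
    (Set.mem_Ioo.mpr (abs_lt.mp hyb))
  · have h := ((hasDerivAt_pow (2 * k + 1) z).const_mul (2 * cb k)).div_const (2 * (k:ℝ) + 1)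
    have he : 2 * k + 1 - 1 = 2 * k := by omega
    rw [he] at h
    refine h.congr_deriv (Eq.symm ?_)
    have hne : (2 * (k:ℝ) + 1) ≠ 0 := by positivity
    field_simp
    push_cast
    ring
  · have hzb : |z| ≤ b := by
      rcases Set.mem_Ioo.mp hz with ⟨h1, h2⟩
      rw [abs_le]; exact ⟨by linarith, by linarith⟩
    rw [Real.norm_eq_abs, abs_mul, abs_two, abs_mul, abs_of_nonneg (cb_nonneg k)]
    rw [abs_pow, ← mul_assoc]
    calc 2 * cb k * |z| ^ (2 * k) ≤ 2 * (4 * b ^ 2) ^ k := by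
          rw [mul_assoc]
          exact mul_le_mul_of_nonneg_left (cb_pow_le hzb k) (by norm_num)

private lemma hasDerivAt_arcsin2 {z : ℝ} (hz0 : 0 ≤ z) (hz : z < 1/2) :
    HasDerivAt (fun z : ℝ => Real.arcsin (2 * z)) (2 * gFun z) z := by
  have hne1 : 2 * z ≠ -1 := by linarith
  have hne2 : 2 * z ≠ 1 := by linarith
  have h2z : HasDerivAt (fun z : ℝ => 2 * z) 2 z := by
    simpa using (hasDerivAt_id z).const_mul 2
  have h := (Real.hasDerivAt_arcsin hne1 hne2).comp z h2z
  have hsq : 1 - (2 * z) ^ 2 = 1 - 4 * z ^ 2 := by ring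
  have hgpos := g_pos hz0 hz
  rw [Function.comp_def] at h
  refine h.congr_deriv (Eq.symm ?_)
  rw [hsq, sqrt_eq hz0 hz]
  field_simp

private lemma A_eq {y : ℝ} (hy0 : 0 ≤ y) (hy : y < 1/2) :
    (∑' k : ℕ, 2 * cb k * y ^ (2 * k + 1) / (2 * (k:ℝ) + 1)) = Real.arcsin (2 * y) := by
  have habs : ∀ x : ℝ, x ∈ Set.Icc 0 y → |x| < 1/2 := fun x hx => by
    rw [abs_of_nonneg hx.1]; linarith [hx.2]
  have h := eq_of_has_deriv_right_eq (a := 0) (b := y)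
    (f' := fun z => ∑' k : ℕ, 2 * (cb k * z ^ (2 * k)))
    (f := fun z : ℝ => ∑' k : ℕ, 2 * cb k * z ^ (2 * k + 1) / (2 * (k:ℝ) + 1))
    (g := fun z : ℝ => Real.arcsin (2 * z))
    (fun x hx => (hasDerivAt_A (habs x ⟨hx.1, hx.2.le⟩)).hasDerivWithinAt)
    (fun x hx => ?_)
    (fun x hx => ((hasDerivAt_A (habs x hx)).continuousAt).continuousWithinAt)
    ((Real.continuous_arcsin.comp (continuous_const.mul continuous_id)).continuousOn)
    ?_ y (Set.mem_Icc.mpr ⟨hy0, le_refl y⟩)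
  · exact h
  · have hx12 : x < 1/2 := lt_of_lt_of_le hx.2 (by linarith)
    have hd := hasDerivAt_arcsin2 hx.1 hx12
    have : (∑' k : ℕ, 2 * (cb k * x ^ (2 * k))) = 2 * gFun x := by
      rw [tsum_mul_left]; rfl
    show HasDerivWithinAt (fun z => Real.arcsin (2 * z))
      (∑' k : ℕ, 2 * (cb k * x ^ (2 * k))) (Set.Ici x) x
    rw [this]
    exact hd.hasDerivWithinAt
  · have hz : (∑' k : ℕ, 2 * cb k * (0:ℝ) ^ (2 * k + 1) / (2 * (k:ℝ) + 1)) = 0 := by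
      convert tsum_zero with k
      rw [zero_pow (by omega : 2 * k + 1 ≠ 0)]
      ring
    show (∑' k : ℕ, 2 * cb k * (0:ℝ) ^ (2 * k + 1) / (2 * (k:ℝ) + 1)) = Real.arcsin (2 * 0)
    rw [hz]
    simp [Real.arcsin_zero]

end ASec

noncomputable section JSec

private def hFun (t : ℝ) : ℝ := if t = 0 then 2 else Real.arcsin (2 * t) / t

private lemma hFun_cont : Continuous hFun := by
  rw [continuous_iff_continuousAt]
  intro x
  by_cases hx : x = 0
  · subst hx
    have harc : HasDerivAt (fun t : ℝ => Real.arcsin (2 * t)) 2 0 := by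
      have := hasDerivAt_arcsin2 (le_refl (0:ℝ)) (by norm_num)
      simpa [g_zero] using this
    have hslope := hasDerivAt_iff_tendsto_slope.mp harc
    have hEq : ∀ t : ℝ, t ≠ 0 → hFun t = slope (fun t : ℝ => Real.arcsin (2 * t)) 0 t := by
      intro t ht
      rw [slope_def_field]
      simp [hFun, ht, Real.arcsin_zero]
    have h1 : Filter.Tendsto hFun (nhdsWithin 0 {(0:ℝ)}ᶜ) (nhds 2) := by
      apply Filter.Tendsto.congr' _ hslope
      filter_upwards [self_mem_nhdsWithin] with t ht
      exact (hEq t ht).symm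
    have h2 : Filter.Tendsto hFun (pure (0:ℝ)) (nhds 2) := by
      have : hFun 0 = 2 := by simp [hFun]
      rw [Filter.tendsto_pure_left]
      intro s hs
      refine Filter.mem_pure.mpr ?_
      rw [this]
      exact mem_of_mem_nhds hs
    have hsup : Filter.Tendsto hFun (nhdsWithin 0 {(0:ℝ)}ᶜ ⊔ pure 0) (nhds 2) := h1.sup h2
    rw [nhdsNE_sup_pure] at hsup
    have : hFun 0 = 2 := by simp [hFun]
    rw [ContinuousAt, this]
    exact hsup
  · have hc : ContinuousAt (fun t : ℝ => Real.arcsin (2 * t) / t) x := by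
      exact ((Real.continuous_arcsin.comp (continuous_const.mul continuous_id)).continuousAt).div
        continuousAt_id hx
    apply hc.congr
    filter_upwards [isOpen_ne.mem_nhds hx] with t ht
    simp [hFun, ht]

private lemma hasDerivAt_primitive (y : ℝ) :
    HasDerivAt (fun u : ℝ => ∫ t in (0:ℝ)..u, hFun t) (hFun y) y :=
  intervalIntegral.integral_hasDerivAt_right (hFun_cont.intervalIntegrable _ _)
    (hFun_cont.stronglyMeasurable.stronglyMeasurableAtFilter)
    hFun_cont.continuousAt

private lemma integral_congr_h (y : ℝ) :
    (∫ t in (0:ℝ)..y, Real.arcsin (2 * t) / t) = ∫ t in (0:ℝ)..y, hFun t := by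
  apply intervalIntegral.integral_congr_ae
  have h0 : ∀ᵐ t : ℝ, t ≠ 0 := by
    rw [MeasureTheory.ae_iff]
    have : {t : ℝ | ¬t ≠ 0} = {0} := by ext t; simp
    rw [this]
    exact Real.volume_singleton
  filter_upwards [h0] with t ht _
  simp [hFun, ht]

private lemma summable_J {y : ℝ} (hy : |y| < 1/2) :
    Summable (fun k : ℕ => 2 * cb k * y ^ (2 * k + 1) / (2 * (k:ℝ) + 1) ^ 2) := by
  apply Summable.of_norm_bounded (summable_ratio hy 2)
  intro k
  have hd1 : (1:ℝ) ≤ (2 * (k:ℝ) + 1) ^ 2 := by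
    have : (0:ℝ) ≤ (k:ℝ) := Nat.cast_nonneg k
    nlinarith
  rw [Real.norm_eq_abs, abs_div, abs_of_nonneg (by positivity : (0:ℝ) ≤ (2 * (k:ℝ) + 1) ^ 2)]
  have h1 : |2 * cb k * y ^ (2 * k + 1)| ≤ 2 * (4 * y ^ 2) ^ k := by
    rw [abs_mul, abs_mul, abs_pow, abs_two, abs_of_nonneg (cb_nonneg k), pow_succ, ← mul_assoc]
    have hy1 : |y| ≤ 1 := by linarith [abs_nonneg y]
    calc 2 * cb k * |y| ^ (2 * k) * |y|
        ≤ 2 * ((4 * y ^ 2) ^ k) * 1 := by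
          apply mul_le_mul _ hy1 (abs_nonneg y) (by positivity)
          rw [mul_assoc]
          exact mul_le_mul_of_nonneg_left (cb_pow_le (le_refl _) k |>.trans_eq (by rw [sq_abs]))
            (by norm_num)
    _ = 2 * (4 * y ^ 2) ^ k := by ring
  calc |2 * cb k * y ^ (2 * k + 1)| / (2 * (k:ℝ) + 1) ^ 2
      ≤ |2 * cb k * y ^ (2 * k + 1)| := div_le_self (abs_nonneg _) hd1
  _ ≤ 2 * (4 * y ^ 2) ^ k := h1

private lemma hasDerivAt_J {y : ℝ} (hy : |y| < 1/2) :
    HasDerivAt (fun z : ℝ => ∑' k : ℕ, 2 * cb k * z ^ (2 * k + 1) / (2 * (k:ℝ) + 1) ^ 2)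
      (∑' k : ℕ, 2 * cb k * y ^ (2 * k) / (2 * (k:ℝ) + 1)) y := by
  obtain ⟨b, hb0, hyb, hb⟩ : ∃ b : ℝ, 0 < b ∧ |y| < b ∧ b < 1/2 :=
    ⟨(|y| + 1/2)/2, by linarith [abs_nonneg y], by linarith, by linarith⟩
  have hbb : |b| < 1/2 := by rw [abs_of_pos hb0]; exact hb
  refine hasDerivAt_tsum_of_isPreconnected (F := ℝ) (𝕜 := ℝ) (y₀ := 0)
    (g := fun (k : ℕ) (z : ℝ) => 2 * cb k * z ^ (2 * k + 1) / (2 * (k:ℝ) + 1) ^ 2)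
    (g' := fun (k : ℕ) (z : ℝ) => 2 * cb k * z ^ (2 * k) / (2 * (k:ℝ) + 1))
    (u := fun k : ℕ => 2 * (4 * b ^ 2) ^ k)
    (summable_ratio hbb 2) isOpen_Ioo (convex_Ioo (-b) b).isPreconnected
    (fun k z _ => ?_) (fun k z hz => ?_)
    (Set.mem_Ioo.mpr ⟨by linarith, hb0⟩) (summable_J (y := 0) (by norm_num))
    (Set.mem_Ioo.mpr (abs_lt.mp hyb))
  · have h := ((hasDerivAt_pow (2 * k + 1) z).const_mul (2 * cb k)).div_const
      ((2 * (k:ℝ) + 1) ^ 2)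
    have he : 2 * k + 1 - 1 = 2 * k := by omega
    rw [he] at h
    refine h.congr_deriv (Eq.symm ?_)
    have hne : (2 * (k:ℝ) + 1) ≠ 0 := by positivity
    field_simp
    push_cast
    ring
  · have hzb : |z| ≤ b := by
      rcases Set.mem_Ioo.mp hz with ⟨h1, h2⟩
      rw [abs_le]; exact ⟨by linarith, by linarith⟩
    have hd1 : (1:ℝ) ≤ (2 * (k:ℝ) + 1) := by
      have : (0:ℝ) ≤ (k:ℝ) := Nat.cast_nonneg k
      linarith
    rw [Real.norm_eq_abs, abs_div, abs_of_nonneg (by positivity : (0:ℝ) ≤ 2 * (k:ℝ) + 1)]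
    calc |2 * cb k * z ^ (2 * k)| / (2 * (k:ℝ) + 1)
        ≤ |2 * cb k * z ^ (2 * k)| := div_le_self (abs_nonneg _) hd1
    _ ≤ 2 * (4 * b ^ 2) ^ k := by
        rw [abs_mul, abs_mul, abs_two, abs_of_nonneg (cb_nonneg k), abs_pow, mul_assoc]
        exact mul_le_mul_of_nonneg_left (cb_pow_le hzb k) (by norm_num)

private lemma x_mul_hFun (x : ℝ) : x * hFun x = Real.arcsin (2 * x) := by
  by_cases hx : x = 0
  · simp [hFun, hx]
  · simp only [hFun, hx, if_false]
    field_simp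

private lemma dJ_eq_hFun {x : ℝ} (hx0 : 0 ≤ x) (hx : x < 1/2) :
    (∑' k : ℕ, 2 * cb k * x ^ (2 * k) / (2 * (k:ℝ) + 1)) = hFun x := by
  have hxabs : |x| < 1/2 := by rw [abs_of_nonneg hx0]; exact hx
  by_cases hxz : x = 0
  · subst hxz
    rw [tsum_eq_single 0 (fun k hk => by
      rw [zero_pow (by omega : 2 * k ≠ 0)]
      simp)]
    simp [hFun, cb_zero]
  · have hA := A_eq hx0 hx
    have hterm : ∀ k : ℕ, 2 * cb k * x ^ (2 * k + 1) / (2 * (k:ℝ) + 1)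
        = x * (2 * cb k * x ^ (2 * k) / (2 * (k:ℝ) + 1)) := by
      intro k
      rw [pow_succ]
      ring
    rw [funext hterm, tsum_mul_left] at hA
    simp only [hFun, hxz, if_false]
    rw [← hA]
    field_simp

private lemma J_eq {y : ℝ} (hy0 : 0 ≤ y) (hy : y < 1/2) :
    (∑' k : ℕ, 2 * cb k * y ^ (2 * k + 1) / (2 * (k:ℝ) + 1) ^ 2)
      = ∫ t in (0:ℝ)..y, hFun t := by
  have habs : ∀ x : ℝ, x ∈ Set.Icc 0 y → |x| < 1/2 := fun x hx => by
    rw [abs_of_nonneg hx.1]; linarith [hx.2]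
  have h := eq_of_has_deriv_right_eq (a := 0) (b := y)
    (f' := hFun)
    (f := fun z : ℝ => ∑' k : ℕ, 2 * cb k * z ^ (2 * k + 1) / (2 * (k:ℝ) + 1) ^ 2)
    (g := fun z : ℝ => ∫ t in (0:ℝ)..z, hFun t)
    (fun x hx => ?_)
    (fun x _ => (hasDerivAt_primitive x).hasDerivWithinAt)
    (fun x hx => ((hasDerivAt_J (habs x hx)).continuousAt).continuousWithinAt)
    (fun x _ => ((hasDerivAt_primitive x).continuousAt).continuousWithinAt)
    ?_ y (Set.mem_Icc.mpr ⟨hy0, le_refl y⟩)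
  · exact h
  · have hx12 : x < 1/2 := lt_of_lt_of_le hx.2 (by linarith)
    have hd := hasDerivAt_J (habs x ⟨hx.1, hx.2.le⟩)
    rw [dJ_eq_hFun hx.1 hx12] at hd
    exact hd.hasDerivWithinAt
  · show (∑' k : ℕ, 2 * cb k * (0:ℝ) ^ (2 * k + 1) / (2 * (k:ℝ) + 1) ^ 2)
      = ∫ t in (0:ℝ)..(0:ℝ), hFun t
    rw [intervalIntegral.integral_same]
    convert tsum_zero with k
    rw [zero_pow (by omega : 2 * k + 1 ≠ 0)]
    ring

end JSec

noncomputable section F3Sec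

private lemma summable_inv_sq : Summable (fun k : ℕ => (1:ℝ) / ((k:ℝ) + 1) ^ 2) := by
  have base : Summable (fun n : ℕ => (1:ℝ) / (n:ℝ) ^ 2) :=
    Real.summable_one_div_nat_pow.mpr (by norm_num)
  have h := (summable_nat_add_iff 1).mpr base
  apply h.congr
  intro k
  push_cast
  ring

private lemma t3_bound {y : ℝ} (hy : |y| ≤ 1/2) (k : ℕ) :
    |cb (k + 1) * y ^ (2 * k + 2) / (2 * (k:ℝ) + 1) ^ 3| ≤ 1 / ((k:ℝ) + 1) ^ 2 := by
  have hk0 : (0:ℝ) ≤ (k:ℝ) := Nat.cast_nonneg k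
  have hnum : cb (k + 1) * |y| ^ (2 * k + 2) ≤ 1 := by
    have h := cb_pow_le (b := 1/2) hy (k + 1)
    have he : 2 * (k + 1) = 2 * k + 2 := by omega
    rw [he] at h
    calc cb (k + 1) * |y| ^ (2 * k + 2) ≤ (4 * (1/2:ℝ) ^ 2) ^ (k + 1) := h
    _ = 1 := by norm_num
  have hd : ((k:ℝ) + 1) ^ 2 ≤ (2 * (k:ℝ) + 1) ^ 3 := by
    nlinarith [mul_nonneg hk0 hk0, mul_nonneg (mul_nonneg hk0 hk0) hk0]
  rw [abs_div, abs_mul, abs_of_nonneg (cb_nonneg _), abs_pow,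
    abs_of_nonneg (by positivity : (0:ℝ) ≤ (2 * (k:ℝ) + 1) ^ 3)]
  calc cb (k + 1) * |y| ^ (2 * k + 2) / (2 * (k:ℝ) + 1) ^ 3
      ≤ 1 / (2 * (k:ℝ) + 1) ^ 3 := by gcongr
  _ ≤ 1 / ((k:ℝ) + 1) ^ 2 := one_div_le_one_div_of_le (by positivity) hd

end F3Sec

noncomputable section FinalSec

private lemma summable_t3 {y : ℝ} (hy : |y| ≤ 1/2) :
    Summable (fun k : ℕ => cb (k + 1) * y ^ (2 * k + 2) / (2 * (k:ℝ) + 1) ^ 3) := by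
  apply Summable.of_norm_bounded summable_inv_sq
  intro k
  rw [Real.norm_eq_abs]
  exact t3_bound hy k

private lemma hasDerivAt_t3sum {y : ℝ} (hy : |y| < 1/2) :
    HasDerivAt (fun z : ℝ => ∑' k : ℕ, cb (k + 1) * z ^ (2 * k + 2) / (2 * (k:ℝ) + 1) ^ 3)
      (∑' k : ℕ, 2 * (2 * cb k * y ^ (2 * k + 1) / (2 * (k:ℝ) + 1) ^ 2)) y := by
  refine hasDerivAt_tsum_of_isPreconnected (F := ℝ) (𝕜 := ℝ) (y₀ := 0)
    (t := Set.Ioo (-(1/2)) (1/2))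
    (g := fun (k : ℕ) (z : ℝ) => cb (k + 1) * z ^ (2 * k + 2) / (2 * (k:ℝ) + 1) ^ 3)
    (g' := fun (k : ℕ) (z : ℝ) => 2 * (2 * cb k * z ^ (2 * k + 1) / (2 * (k:ℝ) + 1) ^ 2))
    (u := fun k : ℕ => 2 / ((k:ℝ) + 1) ^ 2)
    (summable_inv_sq.mul_left 2 |>.congr (fun k => by ring))
    isOpen_Ioo (convex_Ioo _ _).isPreconnected
    (fun k z _ => ?_) (fun k z hz => ?_)
    (Set.mem_Ioo.mpr ⟨by norm_num, by norm_num⟩)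
    (summable_t3 (y := 0) (by norm_num))
    (Set.mem_Ioo.mpr (abs_lt.mp hy))
  · have h := ((hasDerivAt_pow (2 * k + 2) z).const_mul (cb (k + 1))).div_const
      ((2 * (k:ℝ) + 1) ^ 3)
    have he : 2 * k + 2 - 1 = 2 * k + 1 := by omega
    rw [he] at h
    refine h.congr_deriv (Eq.symm ?_)
    have hne : (2 * (k:ℝ) + 1) ≠ 0 := by positivity
    have hc : cb (k + 1) * (2 * (k:ℝ) + 2) = (8 * (k:ℝ) + 4) * cb k := by
      linear_combination 2 * cb_rec k
    field_simp
    push_cast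
    linear_combination (2 * (k:ℝ) + 1) ^ 2 * z ^ (2 * k + 1) * hc
      + (-4 * (2 * (k:ℝ) + 1) ^ 2 * z ^ (2 * k + 1)) * cb_rec k
      + 8 * (k:ℝ) * ((k:ℝ) + 1) * z ^ (2 * k + 1) * cb_rec k
  · have hzb : |z| ≤ 1/2 := by
      rcases Set.mem_Ioo.mp hz with ⟨h1, h2⟩
      rw [abs_le]; exact ⟨by linarith, by linarith⟩
    have hk0 : (0:ℝ) ≤ (k:ℝ) := Nat.cast_nonneg k
    have hd : ((k:ℝ) + 1) ^ 2 ≤ (2 * (k:ℝ) + 1) ^ 2 := by nlinarith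
    have hnum : cb k * |z| ^ (2 * k + 1) ≤ 1/2 := by
      have h := cb_pow_le (b := 1/2) hzb k
      have h12 : (4 * (1/2:ℝ) ^ 2) ^ k = 1 := by norm_num
      rw [h12] at h
      calc cb k * |z| ^ (2 * k + 1) = cb k * |z| ^ (2 * k) * |z| := by rw [pow_succ, mul_assoc]
      _ ≤ 1 * (1/2) := mul_le_mul h hzb (abs_nonneg z) zero_le_one
      _ = 1/2 := by norm_num
    rw [Real.norm_eq_abs, abs_mul, abs_of_nonneg (by norm_num : (0:ℝ) ≤ 2), abs_div,
      abs_mul, abs_mul, abs_two, abs_of_nonneg (cb_nonneg k), abs_pow,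
      abs_of_nonneg (by positivity : (0:ℝ) ≤ (2 * (k:ℝ) + 1) ^ 2), ← mul_div_assoc]
    rw [div_le_div_iff₀ (by positivity) (by positivity)]
    nlinarith [hnum, hd, mul_nonneg (cb_nonneg k) (pow_nonneg (abs_nonneg z) (2 * k + 1)),
      sq_nonneg ((k:ℝ) + 1)]

private lemma hasDerivAt_sqrt14 {x : ℝ} (hx0 : 0 ≤ x) (hx : x < 1/2) :
    HasDerivAt (fun z : ℝ => Real.sqrt (1 - 4 * z ^ 2)) (-(4 * x * gFun x)) x := by
  have h14 : 1 - 4 * x ^ 2 ≠ 0 := by nlinarith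
  have h1 : HasDerivAt (fun z : ℝ => 1 - 4 * z ^ 2) (-(8 * x)) x := by
    have := ((hasDerivAt_pow 2 x).const_mul 4).const_sub 1
    refine this.congr_deriv (Eq.symm ?_)
    push_cast
    ring
  have hs := (Real.hasDerivAt_sqrt h14).comp x h1
  rw [Function.comp_def] at hs
  refine hs.congr_deriv (Eq.symm ?_)
  rw [sqrt_eq hx0 hx]
  have hg := g_pos hx0 hx
  field_simp
  ring

private lemma main_eq {x : ℝ} (hx : x ∈ Set.Icc (0:ℝ) (1/2)) :
    (∑' k : ℕ, cb (k + 1) * x ^ (2 * k + 2) / (2 * (k:ℝ) + 1) ^ 3)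
      = 1 - Real.sqrt (1 - 4 * x ^ 2) - 2 * x * Real.arcsin (2 * x)
        + 2 * x * ∫ t in (0:ℝ)..x, hFun t := by
  have hprim_cont : Continuous (fun z : ℝ => ∫ t in (0:ℝ)..z, hFun t) :=
    continuous_iff_continuousAt.mpr (fun z => (hasDerivAt_primitive z).continuousAt)
  have h := eq_of_has_deriv_right_eq (a := 0) (b := 1/2)
    (f' := fun z : ℝ => 2 * ∫ t in (0:ℝ)..z, hFun t)
    (f := fun z : ℝ => ∑' k : ℕ, cb (k + 1) * z ^ (2 * k + 2) / (2 * (k:ℝ) + 1) ^ 3)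
    (g := fun z : ℝ => 1 - Real.sqrt (1 - 4 * z ^ 2) - 2 * z * Real.arcsin (2 * z)
        + 2 * z * ∫ t in (0:ℝ)..z, hFun t)
    (fun z hz => ?_) (fun z hz => ?_) ?_ ?_ ?_ x hx
  · exact h
  · -- series side derivative
    have hza : |z| < 1/2 := by
      rw [abs_of_nonneg hz.1]; exact hz.2
    have hd := hasDerivAt_t3sum hza
    rw [tsum_mul_left, J_eq hz.1 hz.2] at hd
    exact hd.hasDerivWithinAt
  · -- closed form side derivative
    have hz2 : z < 1/2 := hz.2
    have h2z : HasDerivAt (fun z : ℝ => 2 * z) 2 z := by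
      simpa using (hasDerivAt_id z).const_mul 2
    have c1 := (hasDerivAt_sqrt14 hz.1 hz2).const_sub 1
    have c2 := h2z.mul (hasDerivAt_arcsin2 hz.1 hz2)
    have c3 := h2z.mul (hasDerivAt_primitive z)
    have total := (c1.sub c2).add c3
    have hxh := x_mul_hFun z
    refine total.hasDerivWithinAt.congr_deriv (Eq.symm ?_)
    linear_combination (-2 : ℝ) * hxh
  · -- continuity of series
    apply continuousOn_tsum (u := fun k : ℕ => 1 / ((k:ℝ) + 1) ^ 2)
    · intro k
      exact ((continuous_const.mul (continuous_pow (2 * k + 2))).div_const _).continuousOn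
    · exact summable_inv_sq
    · intro k z hz
      rw [Real.norm_eq_abs]
      apply t3_bound _ k
      rw [abs_le]
      exact ⟨by linarith [hz.1], hz.2⟩
  · -- continuity of closed form
    apply Continuous.continuousOn
    have hsqrt : Continuous (fun z : ℝ => Real.sqrt (1 - 4 * z ^ 2)) :=
      Real.continuous_sqrt.comp (continuous_const.sub (continuous_const.mul (continuous_pow 2)))
    have harc : Continuous (fun z : ℝ => Real.arcsin (2 * z)) :=
      Real.continuous_arcsin.comp (continuous_const.mul continuous_id)
    exact ((continuous_const.sub hsqrt).sub ((continuous_const.mul continuous_id).mul harc)).add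
      ((continuous_const.mul continuous_id).mul hprim_cont)
  · -- initial value at 0
    have hz : (∑' k : ℕ, cb (k + 1) * (0:ℝ) ^ (2 * k + 2) / (2 * (k:ℝ) + 1) ^ 3) = 0 := by
      convert tsum_zero with k
      rw [zero_pow (by omega : 2 * k + 2 ≠ 0)]
      ring
    show (∑' k : ℕ, cb (k + 1) * (0:ℝ) ^ (2 * k + 2) / (2 * (k:ℝ) + 1) ^ 3)
      = 1 - Real.sqrt (1 - 4 * (0:ℝ) ^ 2) - 2 * 0 * Real.arcsin (2 * 0)
        + 2 * 0 * ∫ t in (0:ℝ)..(0:ℝ), hFun t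
    rw [hz]
    norm_num [Real.sqrt_one]

end FinalSec

theorem central_binomial_series_three (x : ℝ) (hx : x ∈ Set.Icc (0 : ℝ) (1/2)) :
    HasSum (fun k : ℕ =>
        (Nat.choose (2 * (k + 1)) (k + 1) : ℝ) * x ^ (2 * (k + 1))
          / ((2 * (k + 1) : ℝ) - 1) ^ 3)
      (1 - Real.sqrt (1 - 4 * x ^ 2) - 2 * x * Real.arcsin (2 * x)
        + 2 * x * ∫ y in (0:ℝ)..x, Real.arcsin (2 * y) / y) := by
  obtain ⟨hx0, hx2⟩ := hx
  have hxa : |x| ≤ 1/2 := by rw [abs_of_nonneg hx0]; exact hx2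
  have heq : (fun k : ℕ => (Nat.choose (2 * (k + 1)) (k + 1) : ℝ) * x ^ (2 * (k + 1))
        / ((2 * (k + 1) : ℝ) - 1) ^ 3)
      = fun k : ℕ => cb (k + 1) * x ^ (2 * k + 2) / (2 * (k:ℝ) + 1) ^ 3 := by
    funext k
    have h1 : (Nat.choose (2 * (k + 1)) (k + 1) : ℝ) = cb (k + 1) := by
      rw [cb, Nat.centralBinom_eq_two_mul_choose]
    have h2 : 2 * (k + 1) = 2 * k + 2 := by omega
    rw [h1, h2]
    congr 1
    push_cast
    ring
  rw [heq, Summable.hasSum_iff (summable_t3 hxa), integral_congr_h,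
    main_eq (Set.mem_Icc.mpr ⟨hx0, hx2⟩)]
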